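/- For every real number c with 0 < c ≤ 1/4, the Lebesgue measure (volume) of the set {(r,s,t) ∈ [0,1]³ : Q(r,s,t) ≤ c} equals c − (3c − 1/2)·ln c + (1 − 4c)^{3/2}·artanh(√(1 − 4c)). -/

import Mathlib

/-!
The involution `p ↦ 1 - p` of the cube preserves `Q` and exchanges the half-cubes `r + s < 1` and
`r + s > 1`, so the volume is twice that of the lower half. There `Q = r s + (1 - r - s) (1 - t)`
is affine and decreasing in `t`, so the `t`-fibre has length
`clamp ((c - r s) / (1 - r - s))`, and integrating over `s` gives an explicit area `A(r)` built
from `q(r) = r² - r + c = (r - α)(r - β)`, where `α, β = (1 ∓ √(1 - 4c)) / 2`. On `[1 - c, 1]`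
the area is `1 - r`. On `[0, 1 - c]` it is given by one formula except on `(α, β)`, where the
discrepancy `q(r) (log r - log (1 - r))` is odd about `r = 1/2` and integrates to zero. The
remaining integral is evaluated with an explicit primitive.
-/

open MeasureTheory Real

/-- The inverse hyperbolic tangent, `artanh a = (1/2)·ln((1+a)/(1−a))`. -/
noncomputable def artanh (a : ℝ) : ℝ := (1 / 2) * Real.log ((1 + a) / (1 - a))

namespace AreaRatio

open Set

def areaRatio (p : ℝ × ℝ × ℝ) : ℝ :=
  p.1 * p.2.1 * p.2.2 + (1 - p.1) * (1 - p.2.1) * (1 - p.2.2)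

def sublevel (c : ℝ) : Set (ℝ × ℝ × ℝ) :=
  {p | p ∈ Icc (0:ℝ) 1 ×ˢ Icc (0:ℝ) 1 ×ˢ Icc (0:ℝ) 1 ∧ areaRatio p ≤ c}

def lowerHalf (c : ℝ) : Set (ℝ × ℝ × ℝ) := sublevel c ∩ {p | p.1 + p.2.1 < 1}

lemma measurable_areaRatio : Measurable areaRatio := by unfold areaRatio; fun_prop

lemma measurableSet_sublevel (c : ℝ) : MeasurableSet (sublevel c) :=
  (measurableSet_Icc.prod (measurableSet_Icc.prod measurableSet_Icc)).inter
    (measurableSet_le measurable_areaRatio measurable_const)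

lemma measurableSet_lowerHalf (c : ℝ) : MeasurableSet (lowerHalf c) :=
  (measurableSet_sublevel c).inter (measurableSet_lt (by fun_prop) measurable_const)

section Symmetry

lemma measurePreserving_one_sub : MeasurePreserving (fun p : ℝ × ℝ × ℝ => 1 - p) := by
  have h := Measure.measurePreserving_sub_left (volume : Measure ℝ) 1
  exact h.prod (h.prod h)

lemma areaRatio_one_sub (p : ℝ × ℝ × ℝ) : areaRatio (1 - p) = areaRatio p := by
  simp only [areaRatio, Prod.fst_sub, Prod.snd_sub, Prod.fst_one, Prod.snd_one]; ring

lemma one_sub_mem_sublevel {c : ℝ} {p : ℝ × ℝ × ℝ} : 1 - p ∈ sublevel c ↔ p ∈ sublevel c := by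
  simp only [sublevel, mem_ofPred_eq, areaRatio_one_sub, mem_prod, mem_Icc, Prod.fst_sub,
    Prod.snd_sub, Prod.fst_one, Prod.snd_one, sub_nonneg, sub_le_self_iff]
  tauto

lemma volume_add_eq_one_eq_zero : volume {p : ℝ × ℝ × ℝ | p.1 + p.2.1 = 1} = 0 := by
  have hm : MeasurableSet {p : ℝ × ℝ × ℝ | p.1 + p.2.1 = 1} :=
    measurableSet_eq_fun (by fun_prop) measurable_const
  have hsection (r : ℝ) :
      Prod.mk r ⁻¹' {p : ℝ × ℝ × ℝ | p.1 + p.2.1 = 1} = {1 - r} ×ˢ univ := by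
    ext q; simp [eq_sub_iff_add_eq']
  simp [Measure.volume_eq_prod, Measure.prod_apply hm, hsection, Measure.prod_prod]

lemma volume_sublevel_eq_two_mul (c : ℝ) :
    volume (sublevel c) = 2 * volume (lowerHalf c) := by
  set H := {p : ℝ × ℝ × ℝ | p.1 + p.2.1 < 1}
  have hH : MeasurableSet H := measurableSet_lt (by fun_prop) measurable_const
  have hupper : sublevel c \ H =ᵐ[volume] (fun p => 1 - p) ⁻¹' lowerHalf c := by
    refine ae_eq_set.mpr ⟨measure_mono_null ?_ volume_add_eq_one_eq_zero,
      measure_mono_null ?_ volume_add_eq_one_eq_zero⟩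
    · rintro p ⟨⟨hS, hpH⟩, hp⟩
      have hσ : ¬ (1 - p.1) + (1 - p.2.1) < 1 := fun h => hp ⟨one_sub_mem_sublevel.mpr hS, h⟩
      exact le_antisymm (by linarith [not_lt.mp hσ]) (not_lt.mp hpH)
    · rintro p ⟨⟨hS, hσ⟩, hp⟩
      have hσ' : (1 - p.1) + (1 - p.2.1) < 1 := hσ
      exact absurd ⟨one_sub_mem_sublevel.mp hS, fun h : p.1 + p.2.1 < 1 => by linarith⟩ hp
  calc volume (sublevel c)
      = volume (lowerHalf c) + volume (sublevel c \ H) := (measure_inter_add_sdiff _ hH).symm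
    _ = volume (lowerHalf c) + volume ((fun p => 1 - p) ⁻¹' lowerHalf c) :=
      congrArg _ (measure_congr hupper)
    _ = 2 * volume (lowerHalf c) := by
      rw [measurePreserving_one_sub.measure_preimage
        (measurableSet_lowerHalf c).nullMeasurableSet, two_mul]

end Symmetry

section Fubini

noncomputable def sliceLength (c r s : ℝ) : ℝ := max 0 (min 1 ((c - r * s) / (1 - r - s)))

lemma sliceLength_nonneg (c r s : ℝ) : 0 ≤ sliceLength c r s := le_max_left _ _

lemma sliceLength_le_one (c r s : ℝ) : sliceLength c r s ≤ 1 :=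
  max_le zero_le_one (min_le_left _ _)

lemma intervalIntegrable_sliceLength (c r a b : ℝ) :
    IntervalIntegrable (sliceLength c r) volume a b :=
  intervalIntegrable_iff.mpr <| IntegrableOn.of_bound measure_Ioc_lt_top
    (by unfold sliceLength; fun_prop : Measurable (sliceLength c r)).aestronglyMeasurable 1 <|
      ae_of_all _ fun s => by
        rw [Real.norm_of_nonneg (sliceLength_nonneg c r s)]; exact sliceLength_le_one c r s

noncomputable def sliceArea (c r : ℝ) : ℝ := ∫ s in 0..1 - r, sliceLength c r s

lemma sliceArea_nonneg {c r : ℝ} (hr : r ≤ 1) : 0 ≤ sliceArea c r :=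
  intervalIntegral.integral_nonneg (by linarith) fun s _ => sliceLength_nonneg c r s

lemma volume_setOf_areaRatio_le {c r s : ℝ} (h : r + s < 1) :
    volume {t : ℝ | t ∈ Icc 0 1 ∧ areaRatio (r, s, t) ≤ c} =
      ENNReal.ofReal (sliceLength c r s) := by
  have hm : 0 < 1 - r - s := by linarith
  have hset : {t : ℝ | t ∈ Icc 0 1 ∧ areaRatio (r, s, t) ≤ c} =
      Icc (max 0 (1 - (c - r * s) / (1 - r - s))) 1 := by
    ext t
    have : areaRatio (r, s, t) ≤ c ↔ 1 - (c - r * s) / (1 - r - s) ≤ t := by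
      rw [sub_le_comm, le_div_iff₀ hm, areaRatio]
      constructor <;> intro h <;> nlinarith
    simp only [mem_ofPred_eq, mem_Icc, max_le_iff, this]
    tauto
  have hlen :
      1 - max 0 (1 - (c - r * s) / (1 - r - s)) = min 1 ((c - r * s) / (1 - r - s)) := by
    rw [← min_sub_sub_left, sub_zero, sub_sub_cancel]
  rw [hset, Real.volume_Icc, hlen, sliceLength]
  simp

lemma volume_fiber_lowerHalf {c r : ℝ} (hr : r ∈ Icc (0:ℝ) 1) (s : ℝ) :
    volume {t | (r, s, t) ∈ lowerHalf c} =
      (Ico 0 (1 - r)).indicator (fun s => ENNReal.ofReal (sliceLength c r s)) s := by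
  by_cases hs : s ∈ Ico 0 (1 - r)
  · have hfiber : {t | (r, s, t) ∈ lowerHalf c} =
        {t : ℝ | t ∈ Icc 0 1 ∧ areaRatio (r, s, t) ≤ c} := by
      ext t
      simp only [lowerHalf, sublevel, mem_inter_iff, mem_ofPred_eq, mem_prod, mem_Icc]
      constructor
      · rintro ⟨⟨⟨_, _, ht⟩, hQ⟩, _⟩; exact ⟨ht, hQ⟩
      · rintro ⟨ht, hQ⟩
        exact ⟨⟨⟨hr, ⟨hs.1, by linarith [hs.2, hr.1]⟩, ht⟩, hQ⟩, by linarith [hs.2]⟩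
    rw [hfiber, volume_setOf_areaRatio_le (by linarith [hs.2]), indicator_of_mem hs]
  · rw [indicator_of_notMem hs, measure_eq_zero_iff_ae_notMem.mpr (ae_of_all _ ?_)]
    rintro t ⟨⟨⟨_, hs', _⟩, _⟩, hH⟩
    exact hs ⟨hs'.1, by simp only [mem_ofPred_eq] at hH; linarith⟩

lemma volume_section_lowerHalf {c r : ℝ} (hr : r ∈ Icc (0:ℝ) 1) :
    volume (Prod.mk r ⁻¹' lowerHalf c) = ENNReal.ofReal (sliceArea c r) := by
  rw [Measure.volume_eq_prod,
    Measure.prod_apply ((measurableSet_lowerHalf c).preimage measurable_prodMk_left)]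
  trans ∫⁻ s, (Ico 0 (1 - r)).indicator (fun s => ENNReal.ofReal (sliceLength c r s)) s
  · exact lintegral_congr fun s => volume_fiber_lowerHalf hr s
  rw [lintegral_indicator measurableSet_Ico, setLIntegral_congr Ico_ae_eq_Ioc,
    ← ofReal_integral_eq_lintegral_ofReal (intervalIntegrable_sliceLength c r 0 (1 - r)).1
      (ae_of_all _ fun s => sliceLength_nonneg c r s), sliceArea,
    intervalIntegral.integral_of_le (by linarith [hr.2])]

lemma toReal_volume_lowerHalf (c : ℝ) :
    (volume (lowerHalf c)).toReal = ∫ r in (0:ℝ)..1, sliceArea c r := by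
  have hS := measurableSet_lowerHalf c
  have hfin (r : ℝ) : volume (Prod.mk r ⁻¹' lowerHalf c) < ⊤ :=
    (measure_mono fun q hq => hq.1.1.2).trans_lt
      (isCompact_Icc.prod isCompact_Icc).measure_lt_top
  have hout (r : ℝ) (hr : r ∉ Icc (0:ℝ) 1) :
      (volume (Prod.mk r ⁻¹' lowerHalf c)).toReal = 0 := by
    rw [show Prod.mk r ⁻¹' lowerHalf c = ∅ from
      eq_empty_of_forall_notMem fun q hq => hr hq.1.1.1, measure_empty, ENNReal.toReal_zero]
  rw [Measure.volume_eq_prod, Measure.prod_apply hS,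
    ← integral_toReal (measurable_measure_prodMk_left hS).aemeasurable (ae_of_all _ hfin),
    ← setIntegral_eq_integral_of_forall_compl_eq_zero hout,
    setIntegral_congr_fun measurableSet_Icc fun r hr => by
      rw [volume_section_lowerHalf hr, ENNReal.toReal_ofReal (sliceArea_nonneg hr.2)],
    integral_Icc_eq_integral_Ioc, ← intervalIntegral.integral_of_le zero_le_one]

lemma sliceArea_le_one_sub {c r : ℝ} (hr : r ≤ 1) : sliceArea c r ≤ 1 - r := by
  calc sliceArea c r ≤ ∫ _ in (0:ℝ)..1 - r, (1 : ℝ) :=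
        intervalIntegral.integral_mono_on (by linarith) (intervalIntegrable_sliceLength c r _ _)
          intervalIntegrable_const fun s _ => sliceLength_le_one c r s
    _ = 1 - r := by simp

lemma intervalIntegrable_sliceArea (c : ℝ) {a b : ℝ} (ha : 0 ≤ a) (hab : a ≤ b) (hb : b ≤ 1) :
    IntervalIntegrable (sliceArea c) volume a b := by
  -- On `[0, 1]`, `sliceArea c` is the measure of the sections of `lowerHalf c`, hence measurable.
  have hmeas : AEStronglyMeasurable (sliceArea c) (volume.restrict (Icc 0 1)) :=
    (measurable_measure_prodMk_left (ν := volume) (measurableSet_lowerHalf c)).ennreal_toReal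
      |>.aestronglyMeasurable.congr <| (ae_restrict_iff' measurableSet_Icc).mpr <| ae_of_all _
        fun r hr => by
          dsimp only
          rw [volume_section_lowerHalf hr, ENNReal.toReal_ofReal (sliceArea_nonneg hr.2)]
  have hint : IntegrableOn (sliceArea c) (Icc 0 1) :=
    IntegrableOn.of_bound measure_Icc_lt_top hmeas 1 <|
      (ae_restrict_iff' measurableSet_Icc).mpr <| ae_of_all _ fun r hr => by
        rw [Real.norm_of_nonneg (sliceArea_nonneg hr.2)]
        linarith [sliceArea_le_one_sub (c := c) hr.2, hr.1]
  exact (intervalIntegrable_iff_integrableOn_Ioc_of_le hab).mpr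
    (hint.mono_set fun r hr => ⟨by linarith [hr.1], by linarith [hr.2]⟩)

lemma toReal_volume_sublevel (c : ℝ) :
    (volume (sublevel c)).toReal = 2 * ∫ r in (0:ℝ)..1, sliceArea c r := by
  rw [volume_sublevel_eq_two_mul, ENNReal.toReal_mul, toReal_volume_lowerHalf]
  norm_num

end Fubini

section SliceArea

variable {c r : ℝ}

lemma sliceLength_eq_div {s : ℝ} (hm : 0 < 1 - r - s) (h0 : 0 ≤ c - r * s)
    (h1 : c - r * s ≤ 1 - r - s) : sliceLength c r s = (c - r * s) / (1 - r - s) := by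
  rw [sliceLength, min_eq_right ((div_le_one hm).mpr h1), max_eq_right (div_nonneg h0 hm.le)]

lemma sliceLength_eq_zero {s : ℝ} (hm : 0 < 1 - r - s) (h : c - r * s ≤ 0) :
    sliceLength c r s = 0 := by
  have : (c - r * s) / (1 - r - s) ≤ 0 := div_nonpos_of_nonpos_of_nonneg h hm.le
  rw [sliceLength, min_eq_right (by linarith), max_eq_left this]

lemma sliceLength_eq_one {s : ℝ} (hm : 0 < 1 - r - s) (h : 1 - r - s ≤ c - r * s) :
    sliceLength c r s = 1 := by
  rw [sliceLength, min_eq_left ((one_le_div hm).mpr h), max_eq_right zero_le_one]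

lemma integral_div_one_sub_sub {S : ℝ} (hS : 0 ≤ S) (hSr : S < 1 - r) :
    ∫ s in (0:ℝ)..S, (c - r * s) / (1 - r - s) =
      r * S - (r ^ 2 - r + c) * (log (1 - r - S) - log (1 - r)) := by
  have hderiv : ∀ s ∈ uIcc 0 S, HasDerivAt (fun s => r * s - (r ^ 2 - r + c) * log (1 - r - s))
      ((c - r * s) / (1 - r - s)) s := by
    intro s hs
    rw [uIcc_of_le hS] at hs
    have hm : 1 - r - s ≠ 0 := by linarith [hs.2]
    have h : HasDerivAt (fun s => r * s - (r ^ 2 - r + c) * log (1 - r - s))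
        (r * 1 - (r ^ 2 - r + c) * (-1 / (1 - r - s))) s :=
      ((hasDerivAt_id s).const_mul r).sub
        ((((hasDerivAt_id s).const_sub (1 - r)).log hm).const_mul (r ^ 2 - r + c))
    exact h.congr_deriv (by field_simp; ring)
  have hcont : ContinuousOn (fun s => (c - r * s) / (1 - r - s)) (uIcc 0 S) := by
    rw [uIcc_of_le hS]
    exact ContinuousOn.div (by fun_prop) (by fun_prop) fun s hs => by linarith [hs.2]
  rw [intervalIntegral.integral_eq_sub_of_hasDerivAt hderiv hcont.intervalIntegrable]
  simp only [mul_zero, sub_zero]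
  ring

lemma sliceArea_of_one_sub_le (hr : 1 - c ≤ r) (hr1 : r ≤ 1) : sliceArea c r = 1 - r := by
  rw [sliceArea, intervalIntegral.integral_congr_Ioo_of_le (by linarith) (g := fun _ => 1)
    fun s hs => sliceLength_eq_one (by linarith [hs.2]) (by nlinarith [hs.1, hs.2])]
  simp

lemma sliceArea_of_neg (hc : 0 ≤ c) (hq : r ^ 2 - r + c < 0) :
    sliceArea c r = c + (r ^ 2 - r + c) * (log r + log (1 - r) - log (r ^ 2 - r + c)) := by
  have hr : 0 < r := by nlinarith
  have hS : c / r < 1 - r := by rw [div_lt_iff₀ hr]; nlinarith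
  have hrS : r * (c / r) = c := by field_simp
  have hlow : EqOn (sliceLength c r) (fun s => (c - r * s) / (1 - r - s)) (Ioo 0 (c / r)) :=
    fun s hs => sliceLength_eq_div (by linarith [hs.2])
      (by nlinarith [mul_lt_mul_of_pos_left hs.2 hr]) (by nlinarith [hs.1, hs.2])
  have hhigh : EqOn (sliceLength c r) (fun _ => 0) (Ioo (c / r) (1 - r)) :=
    fun s hs => sliceLength_eq_zero (by linarith [hs.2])
      (by nlinarith [mul_lt_mul_of_pos_left hs.1 hr])
  rw [sliceArea, ← intervalIntegral.integral_add_adjacent_intervals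
      (intervalIntegrable_sliceLength c r 0 (c / r)) (intervalIntegrable_sliceLength c r _ _),
    intervalIntegral.integral_congr_Ioo_of_le (by positivity) hlow,
    intervalIntegral.integral_congr_Ioo_of_le hS.le hhigh, intervalIntegral.integral_zero,
    integral_div_one_sub_sub (by positivity) hS, hrS,
    show 1 - r - c / r = -(r ^ 2 - r + c) / r by field_simp; ring,
    log_div (by linarith) hr.ne', log_neg_eq_log]
  ring

lemma sliceArea_of_pos (hc : 0 ≤ c) (hr : 0 ≤ r) (hrc : r < 1 - c) (hq : 0 < r ^ 2 - r + c) :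
    sliceArea c r = c + (r ^ 2 - r + c) * (2 * log (1 - r) - log (r ^ 2 - r + c)) := by
  have hr1 : 0 < 1 - r := by nlinarith
  set S := 1 - r - (r ^ 2 - r + c) / (1 - r) with hS_def
  have hSq : (1 - r) * (1 - r - S) = r ^ 2 - r + c := by rw [hS_def]; field_simp; ring
  have hS0 : 0 ≤ S := by nlinarith
  have hS : S < 1 - r := by nlinarith
  have hlow : EqOn (sliceLength c r) (fun s => (c - r * s) / (1 - r - s)) (Ioo 0 S) :=
    fun s hs => sliceLength_eq_div (by linarith [hs.2])
      (by nlinarith [mul_le_mul_of_nonneg_left hs.2.le hr]) (by nlinarith [hs.1, hs.2])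
  have hhigh : EqOn (sliceLength c r) (fun _ => 1) (Ioo S (1 - r)) :=
    fun s hs => sliceLength_eq_one (by linarith [hs.2]) (by nlinarith [hs.1, hs.2])
  have hrS : r * S + (r ^ 2 - r + c) / (1 - r) = c := by rw [hS_def]; field_simp; ring
  rw [sliceArea, ← intervalIntegral.integral_add_adjacent_intervals
      (intervalIntegrable_sliceLength c r 0 S) (intervalIntegrable_sliceLength c r _ _),
    intervalIntegral.integral_congr_Ioo_of_le hS0 hlow,
    intervalIntegral.integral_congr_Ioo_of_le hS.le hhigh, intervalIntegral.integral_const,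
    integral_div_one_sub_sub hS0 hS,
    show 1 - r - S = (r ^ 2 - r + c) / (1 - r) by field_simp; linarith, log_div hq.ne' hr1.ne']
  simp only [smul_eq_mul, mul_one]
  linear_combination hrS

lemma sliceArea_eqOn_one_sub : EqOn (sliceArea c) (fun r => 1 - r) (Ioo (1 - c) 1) :=
  fun _ hr => sliceArea_of_one_sub_le hr.1.le hr.2.le

lemma integral_sliceArea_one_sub_one (hc : 0 ≤ c) :
    ∫ r in (1 - c)..1, sliceArea c r = c ^ 2 / 2 := by
  rw [intervalIntegral.integral_congr_Ioo_of_le (by linarith) sliceArea_eqOn_one_sub,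
    intervalIntegral.integral_comp_sub_left (fun x => x), sub_self, sub_sub_cancel, integral_id]
  ring

end SliceArea

section Primitive

noncomputable def cubicPrimitive (c r : ℝ) : ℝ := r ^ 3 / 3 - r ^ 2 / 2 + c * r

-- Integration by parts against `cubicPrimitive c r - cubicPrimitive c u`, which vanishes at
-- `r = u` and so leaves a polynomial integrand.
noncomputable def logPrimitive (c u r : ℝ) : ℝ :=
  (cubicPrimitive c r - cubicPrimitive c u) * log (u - r) -
    (r ^ 3 / 9 + u * r ^ 2 / 6 + u ^ 2 * r / 3 - r ^ 2 / 4 - u * r / 2 + c * r)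

lemma hasDerivAt_cubicPrimitive (c r : ℝ) :
    HasDerivAt (cubicPrimitive c) (r ^ 2 - r + c) r := by
  have h : HasDerivAt (fun r : ℝ => r ^ 3 / 3 - r ^ 2 / 2 + c * r)
      ((3 * r ^ 2) / 3 - (2 * r ^ 1) / 2 + c * 1) r :=
    (((hasDerivAt_pow 3 r).div_const 3).sub ((hasDerivAt_pow 2 r).div_const 2)).add
      ((hasDerivAt_id r).const_mul c)
  exact h.congr_deriv (by ring)

lemma hasDerivAt_logPrimitive (c u : ℝ) {r : ℝ} (h : r ≠ u) :
    HasDerivAt (logPrimitive c u) ((r ^ 2 - r + c) * log (u - r)) r := by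
  have hlog : HasDerivAt (fun r => log (u - r)) (-1 / (u - r)) r :=
    ((hasDerivAt_id r).const_sub u).log (sub_ne_zero.mpr h.symm)
  have hpoly : HasDerivAt
      (fun r : ℝ => r ^ 3 / 9 + u * r ^ 2 / 6 + u ^ 2 * r / 3 - r ^ 2 / 4 - u * r / 2 + c * r)
      ((3 * r ^ 2) / 9 + u * (2 * r ^ 1) / 6 + u ^ 2 * 1 / 3 - (2 * r ^ 1) / 4 - u * 1 / 2
        + c * 1) r :=
    ((((((hasDerivAt_pow 3 r).div_const 9).add
      (((hasDerivAt_pow 2 r).const_mul u).div_const 6)).add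
      (((hasDerivAt_id r).const_mul (u ^ 2)).div_const 3)).sub
      ((hasDerivAt_pow 2 r).div_const 4)).sub
      (((hasDerivAt_id r).const_mul u).div_const 2)).add ((hasDerivAt_id r).const_mul c)
  refine ((((hasDerivAt_cubicPrimitive c r).sub_const (cubicPrimitive c u)).mul hlog).sub
    hpoly).congr_deriv ?_
  have hur : u - r ≠ 0 := sub_ne_zero.mpr h.symm
  simp only [cubicPrimitive]
  field_simp
  ring

lemma continuous_logPrimitive (c u : ℝ) : Continuous (logPrimitive c u) := by
  have h : logPrimitive c u = fun r =>
      -(((r ^ 2 + r * u + u ^ 2) / 3 - (r + u) / 2 + c) * ((u - r) * log (u - r)))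
        - (r ^ 3 / 9 + u * r ^ 2 / 6 + u ^ 2 * r / 3 - r ^ 2 / 4 - u * r / 2 + c * r) := by
    funext r
    simp only [logPrimitive, cubicPrimitive]
    ring
  rw [h]
  exact ((by fun_prop : Continuous _).mul (continuous_mul_log.comp (by fun_prop))).neg.sub
    (by fun_prop)

end Primitive

lemma integral_eq_zero_of_antisymm {f : ℝ → ℝ} {a b : ℝ} (h : ∀ x, f (a + b - x) = -f x) :
    ∫ x in a..b, f x = 0 := by
  have hsymm := intervalIntegral.integral_comp_sub_left f (a + b) (a := a) (b := b)
  simp only [h, intervalIntegral.integral_neg, add_sub_cancel_right, add_sub_cancel_left] at hsymm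
  linarith

section Roots

variable {c α β : ℝ}

lemma quadratic_eq_mul (hαβ : α + β = 1) (hc : α * β = c) (r : ℝ) :
    r ^ 2 - r + c = (α - r) * (β - r) := by
  rw [← hc]; linear_combination r * hαβ

-- The factors `x * log x` make it continuous at `α` and `β`; see `sliceAreaFormula_eq`.
noncomputable def sliceAreaFormula (c α β r : ℝ) : ℝ :=
  c + 2 * (r ^ 2 - r + c) * log (1 - r) - (β - r) * ((α - r) * log (α - r))
    - (α - r) * ((β - r) * log (β - r))

noncomputable def sliceAreaPrimitive (c α β r : ℝ) : ℝ :=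
  c * r + 2 * logPrimitive c 1 r - logPrimitive c α r - logPrimitive c β r

lemma sliceAreaFormula_eq (hαβ : α + β = 1) (hc : α * β = c) {r : ℝ} (hα : r ≠ α)
    (hβ : r ≠ β) :
    sliceAreaFormula c α β r =
      c + (r ^ 2 - r + c) * (2 * log (1 - r) - log (r ^ 2 - r + c)) := by
  rw [quadratic_eq_mul hαβ hc, log_mul (sub_ne_zero.mpr hα.symm) (sub_ne_zero.mpr hβ.symm),
    sliceAreaFormula, quadratic_eq_mul hαβ hc]
  ring

lemma hasDerivAt_sliceAreaPrimitive (hαβ : α + β = 1) (hc : α * β = c) {r : ℝ} (h1 : r ≠ 1)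
    (hα : r ≠ α) (hβ : r ≠ β) :
    HasDerivAt (sliceAreaPrimitive c α β) (sliceAreaFormula c α β r) r := by
  refine (((((hasDerivAt_id r).const_mul c).add
    ((hasDerivAt_logPrimitive c 1 h1).const_mul 2)).sub (hasDerivAt_logPrimitive c α hα)).sub
    (hasDerivAt_logPrimitive c β hβ)).congr_deriv ?_
  rw [sliceAreaFormula_eq hαβ hc hα hβ, quadratic_eq_mul hαβ hc,
    log_mul (sub_ne_zero.mpr hα.symm) (sub_ne_zero.mpr hβ.symm)]
  ring

lemma continuousOn_sliceAreaFormula : ContinuousOn (sliceAreaFormula c α β) (Iio 1) := by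
  have hmul_log (u : ℝ) : Continuous fun r : ℝ => (u - r) * log (u - r) :=
    continuous_mul_log.comp (by fun_prop)
  refine ((ContinuousOn.add continuousOn_const ?_).sub
    ((by fun_prop : Continuous fun r : ℝ => β - r).mul (hmul_log α)).continuousOn).sub
    ((by fun_prop : Continuous fun r : ℝ => α - r).mul (hmul_log β)).continuousOn
  exact ContinuousOn.mul (by fun_prop) (continuousOn_log.comp (by fun_prop)
    fun r hr => by simp only [mem_compl_iff, mem_singleton_iff]; linarith [mem_Iio.mp hr])

lemma integral_sliceAreaFormula (hαβ : α + β = 1) (hc : α * β = c) {a b : ℝ} (hab : a ≤ b)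
    (hb : b < 1) :
    ∫ r in a..b, sliceAreaFormula c α β r =
      sliceAreaPrimitive c α β b - sliceAreaPrimitive c α β a := by
  have hcont : ContinuousOn (sliceAreaFormula c α β) (Icc a b) :=
    continuousOn_sliceAreaFormula.mono fun r hr => lt_of_le_of_lt hr.2 hb
  refine integral_eq_of_hasDerivAt_off_countable_of_le _ _ hab ((countable_singleton α).insert β)
    ?_ ?_ (hcont.intervalIntegrable_of_Icc hab)
  · have := continuous_logPrimitive c 1
    have := continuous_logPrimitive c α
    have := continuous_logPrimitive c β
    unfold sliceAreaPrimitive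
    fun_prop
  · rintro r ⟨hr, hrαβ⟩
    simp only [mem_insert_iff, mem_singleton_iff, not_or] at hrαβ
    exact hasDerivAt_sliceAreaPrimitive hαβ hc (by linarith [hr.2]) hrαβ.2 hrαβ.1

lemma sliceArea_eqOn_formula (hαβ : α + β = 1) (hc : α * β = c) (hα : 0 < α) (hle : α ≤ β) :
    EqOn (sliceArea c) (sliceAreaFormula c α β) (Ioo 0 α ∪ Ioo β (1 - c)) := by
  have hc0 : 0 ≤ c := hc ▸ (mul_pos hα (hα.trans_le hle)).le
  intro r hr
  have hq : 0 < (α - r) * (β - r) := by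
    rcases hr with hr | hr
    · exact mul_pos (by linarith [hr.2]) (by linarith [hr.2])
    · exact mul_pos_of_neg_of_neg (by linarith [hr.1]) (by linarith [hr.1])
  have hr0 : 0 ≤ r := by rcases hr with hr | hr <;> linarith [hr.1]
  have hrc : r < 1 - c := by rcases hr with hr | hr <;> nlinarith [hr.2]
  rw [← quadratic_eq_mul hαβ hc] at hq
  rw [sliceArea_of_pos hc0 hr0 hrc hq, sliceAreaFormula_eq hαβ hc] <;>
    rintro rfl <;> simp [quadratic_eq_mul hαβ hc] at hq

lemma sliceArea_eqOn_formula_add (hαβ : α + β = 1) (hc : α * β = c) (hc0 : 0 ≤ c) :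
    EqOn (sliceArea c) (fun r => sliceAreaFormula c α β r + (r ^ 2 - r + c) * (log r - log (1 - r)))
      (Ioo α β) := by
  intro r hr
  have hq : r ^ 2 - r + c < 0 := by
    rw [quadratic_eq_mul hαβ hc]
    exact mul_neg_of_neg_of_pos (by linarith [hr.1]) (by linarith [hr.2])
  dsimp only
  rw [sliceArea_of_neg hc0 hq, sliceAreaFormula_eq hαβ hc hr.1.ne' hr.2.ne]
  ring

lemma integral_log_sub_log_one_sub_eq_zero (hαβ : α + β = 1) :
    ∫ r in α..β, (r ^ 2 - r + c) * (log r - log (1 - r)) = 0 :=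
  integral_eq_zero_of_antisymm fun r => by rw [hαβ, sub_sub_cancel]; ring

lemma integral_sliceArea_zero_one_sub (hαβ : α + β = 1) (hc : α * β = c) (hα : 0 < α)
    (hle : α ≤ β) :
    ∫ r in (0:ℝ)..(1 - c), sliceArea c r =
      sliceAreaPrimitive c α β (1 - c) - sliceAreaPrimitive c α β 0 := by
  have hc0 : 0 < c := hc ▸ mul_pos hα (hα.trans_le hle)
  have hβc : β < 1 - c := by rw [← hc]; nlinarith
  have hF (a b : ℝ) (hab : a ≤ b) (hb : b < 1) :
      IntervalIntegrable (sliceAreaFormula c α β) volume a b :=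
    (continuousOn_sliceAreaFormula.mono fun r hr =>
      lt_of_le_of_lt hr.2 hb).intervalIntegrable_of_Icc hab
  have hG : IntervalIntegrable (fun r => (r ^ 2 - r + c) * (log r - log (1 - r))) volume α β := by
    refine ContinuousOn.intervalIntegrable_of_Icc hle <| ContinuousOn.mul (by fun_prop)
      (ContinuousOn.sub ?_ ?_) <;> refine continuousOn_log.comp (by fun_prop) fun r hr => ?_ <;>
      simp only [mem_compl_iff, mem_singleton_iff] <;> linarith [hr.1, hr.2]
  have hS (a b : ℝ) (ha : 0 ≤ a) (hab : a ≤ b) (hb : b ≤ 1 - c) :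
      IntervalIntegrable (sliceArea c) volume a b :=
    intervalIntegrable_sliceArea c ha hab (by linarith)
  have hout := sliceArea_eqOn_formula hαβ hc hα hle
  rw [← intervalIntegral.integral_add_adjacent_intervals (hS 0 β le_rfl (by linarith) hβc.le)
      (hS β (1 - c) (by linarith) hβc.le le_rfl),
    ← intervalIntegral.integral_add_adjacent_intervals (hS 0 α le_rfl hα.le (by linarith))
      (hS α β hα.le hle hβc.le),
    intervalIntegral.integral_congr_Ioo_of_le hα.le (hout.mono subset_union_left),
    intervalIntegral.integral_congr_Ioo_of_le hle (sliceArea_eqOn_formula_add hαβ hc hc0.le),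
    intervalIntegral.integral_congr_Ioo_of_le hβc.le (hout.mono subset_union_right),
    intervalIntegral.integral_add (hF α β hle (by linarith)) hG,
    integral_log_sub_log_one_sub_eq_zero hαβ, add_zero,
    intervalIntegral.integral_add_adjacent_intervals (hF 0 α hα.le (by linarith))
      (hF α β hle (by linarith)),
    intervalIntegral.integral_add_adjacent_intervals (hF 0 β (by linarith) (by linarith))
      (hF β (1 - c) hβc.le (by linarith)),
    integral_sliceAreaFormula hαβ hc (by linarith) (by linarith)]

lemma integral_sliceArea (hαβ : α + β = 1) (hc : α * β = c) (hα : 0 < α) (hle : α ≤ β) :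
    ∫ r in (0:ℝ)..1, sliceArea c r =
      sliceAreaPrimitive c α β (1 - c) - sliceAreaPrimitive c α β 0 + c ^ 2 / 2 := by
  have hc0 : 0 < c := hc ▸ mul_pos hα (hα.trans_le hle)
  have hc1 : c < 1 := by rw [← hc]; nlinarith
  rw [← intervalIntegral.integral_add_adjacent_intervals
      (intervalIntegrable_sliceArea c le_rfl (b := 1 - c) (by linarith) (by linarith))
      (intervalIntegrable_sliceArea c (by linarith) (by linarith) le_rfl),
    integral_sliceArea_zero_one_sub hαβ hc hα hle, integral_sliceArea_one_sub_one hc0.le]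

lemma two_mul_integral_sliceArea (hαβ : α + β = 1) (hc : α * β = c) (hα : 0 < α)
    (hle : α ≤ β) :
    2 * ∫ r in (0:ℝ)..1, sliceArea c r =
      c - (3 * c - 1 / 2) * log c + (β - α) ^ 3 * ((log β - log α) / 2) := by
  have hβ : 0 < β := hα.trans_le hle
  have hβ' : β = 1 - α := by linarith
  have e1 : α - (1 - c) = -β ^ 2 := by rw [← hc, hβ']; ring
  have e2 : β - (1 - c) = -α ^ 2 := by rw [← hc, hβ']; ring
  rw [integral_sliceArea hαβ hc hα hle]
  simp only [sliceAreaPrimitive, logPrimitive, cubicPrimitive, e1, e2, sub_sub_cancel, sub_zero,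
    log_neg_eq_log, log_pow, log_one]
  rw [← hc, log_mul hα.ne' hβ.ne', hβ']
  push_cast
  ring

end Roots

end AreaRatio

/-- For `0 < c ≤ 1/4`, the volume of
`{(r,s,t) ∈ [0,1]³ : r·s·t + (1−r)·(1−s)·(1−t) ≤ c}` is
`c − (3c − 1/2)·ln c + (1 − 4c)^{3/2}·artanh √(1 − 4c)`. -/
theorem cdf_left (c : ℝ) (hc0 : 0 < c) (hc : c ≤ 1 / 4) :
    (volume {p : ℝ × ℝ × ℝ | p ∈ Set.Icc (0:ℝ) 1 ×ˢ Set.Icc (0:ℝ) 1 ×ˢ Set.Icc (0:ℝ) 1 ∧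
        p.1 * p.2.1 * p.2.2 + (1 - p.1) * (1 - p.2.1) * (1 - p.2.2) ≤ c}).toReal =
      c - (3 * c - 1 / 2) * Real.log c +
        (1 - 4 * c) ^ ((3 : ℝ) / 2) * _root_.artanh (Real.sqrt (1 - 4 * c)) := by
  set d := √(1 - 4 * c)
  have hd0 : 0 ≤ d := sqrt_nonneg _
  have hd2 : d ^ 2 = 1 - 4 * c := sq_sqrt (by linarith)
  have hd1 : d < 1 := by nlinarith
  have hαβ : (1 - d) / 2 + (1 + d) / 2 = 1 := by ring
  have hαβc : (1 - d) / 2 * ((1 + d) / 2) = c := by linear_combination -hd2 / 4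
  have hpow : (1 - 4 * c) ^ ((3 : ℝ) / 2) = ((1 + d) / 2 - (1 - d) / 2) ^ 3 := by
    rw [← hd2, ← rpow_natCast, ← rpow_natCast, ← rpow_mul hd0]
    norm_num
    ring
  have hartanh : _root_.artanh d = (log ((1 + d) / 2) - log ((1 - d) / 2)) / 2 := by
    rw [_root_.artanh, ← log_div (by linarith) (by linarith)]
    field_simp
  change (volume (AreaRatio.sublevel c)).toReal = _
  rw [AreaRatio.toReal_volume_sublevel,
    AreaRatio.two_mul_integral_sliceArea hαβ hαβc (by linarith) (by linarith), hpow, hartanh]
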